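/- Let (X_n) be i.i.d. positive square integrable random variables with mean μ > 0, variance σ² > 0, γ = σ/μ, and C_{n,k} = S_{n,k}/((n-1)μ) with S_{n,k} = ∑_{i=1}^n X_i - X_k. Then (4/(γ√n)) ∑_{k=1}^n (C_{n,k} - 1)² converges to 0 in probability as n → ∞. -/

import Mathlib

open MeasureTheory ProbabilityTheory Filter Topology Finset

/-!
For `k < n` the leave-one-out sum `S_{n,k}` is a sum of `n - 1` independent copies of `X₀`, so
`E (S_{n,k} - (n-1)μ)² = (n-1)σ²`. Summing over `k`, the statistic `(4/(γ√n)) ∑ₖ (C_{n,k} - 1)²`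
has expectation `4γ√n/(n-1) → 0`; being nonnegative, it tends to `0` in probability by Markov's
inequality.
-/

section
variable {Ω ι : Type*} {m : MeasurableSpace Ω} {P : Measure Ω}

theorem measure_ge_le_ofReal_integral_div [IsFiniteMeasure P] {f : Ω → ℝ} (hf : 0 ≤ᵐ[P] f)
    (hint : Integrable f P) {r : ℝ} (hr : 0 < r) :
    P {ω | r ≤ f ω} ≤ ENNReal.ofReal ((∫ ω, f ω ∂P) / r) := by
  rw [← ofReal_measureReal]
  exact ENNReal.ofReal_le_ofReal ((le_div_iff₀' hr).2 (mul_meas_ge_le_integral_of_nonneg hf hint r))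

theorem tendsto_measure_ge_of_tendsto_integral [IsFiniteMeasure P] {α : Type*} {l : Filter α}
    {f : α → Ω → ℝ} (hf : ∀ a, 0 ≤ᵐ[P] f a) (hint : ∀ a, Integrable (f a) P)
    (hlim : Tendsto (fun a => ∫ ω, f a ω ∂P) l (𝓝 0)) {r : ℝ} (hr : 0 < r) :
    Tendsto (fun a => P {ω | r ≤ f a ω}) l (𝓝 0) := by
  have hbound : Tendsto (fun a => ENNReal.ofReal ((∫ ω, f a ω ∂P) / r)) l (𝓝 0) := by
    simpa using ENNReal.tendsto_ofReal (hlim.div_const r)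
  exact tendsto_of_tendsto_of_tendsto_of_le_of_le tendsto_const_nhds hbound (fun _ => zero_le)
    fun a => measure_ge_le_ofReal_integral_div (hf a) (hint a) hr

variable [IsProbabilityMeasure P] {X : ι → Ω → ℝ} {μ σ : ℝ} {s : Finset ι}

theorem integral_sq_sum_sub_card_mul (hL2 : ∀ i ∈ s, MemLp (X i) 2 P)
    (hindep : (s : Set ι).Pairwise fun i j => IndepFun (X i) (X j) P)
    (hmean : ∀ i ∈ s, ∫ ω, X i ω ∂P = μ) (hvar : ∀ i ∈ s, variance (X i) P = σ ^ 2) :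
    ∫ ω, (∑ i ∈ s, X i ω - #s * μ) ^ 2 ∂P = #s * σ ^ 2 := by
  have hsum_mean : ∫ ω, ∑ i ∈ s, X i ω ∂P = #s * μ := by
    rw [integral_finsetSum _ fun i hi => (hL2 i hi).integrable one_le_two,
      Finset.sum_congr rfl hmean]
    simp
  have h := variance_eq_integral (memLp_finsetSum' s hL2).aemeasurable
  rw [IndepFun.variance_sum hL2 hindep, Finset.sum_congr rfl hvar] at h
  simpa [hsum_mean] using h.symm

theorem integral_sum_sq_leave_one_out_sub [DecidableEq ι] (hL2 : ∀ i ∈ s, MemLp (X i) 2 P)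
    (hindep : (s : Set ι).Pairwise fun i j => IndepFun (X i) (X j) P)
    (hmean : ∀ i ∈ s, ∫ ω, X i ω ∂P = μ) (hvar : ∀ i ∈ s, variance (X i) P = σ ^ 2) :
    ∫ ω, ∑ k ∈ s, (∑ i ∈ s, X i ω - X k ω - (#s - 1) * μ) ^ 2 ∂P
      = #s * ((#s - 1) * σ ^ 2) := by
  have hk : ∀ k ∈ s, ∫ ω, (∑ i ∈ s, X i ω - X k ω - (#s - 1) * μ) ^ 2 ∂P
      = (#s - 1) * σ ^ 2 := by
    intro k hk
    have hcard : ((#(s.erase k) : ℕ) : ℝ) = #s - 1 := by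
      rw [Finset.card_erase_of_mem hk, Nat.cast_pred (card_pos.2 ⟨k, hk⟩)]
    simp_rw [← Finset.sum_erase_eq_sub hk, ← hcard]
    exact integral_sq_sum_sub_card_mul (fun i hi => hL2 i (mem_of_mem_erase hi))
      (hindep.mono (by simp)) (fun i hi => hmean i (mem_of_mem_erase hi))
      (fun i hi => hvar i (mem_of_mem_erase hi))
  rw [integral_finsetSum, Finset.sum_congr rfl hk]
  · simp
  · exact fun k _ => (((memLp_finsetSum s hL2).sub (hL2 k ‹_›)).sub (memLp_const _)).integrable_sq

theorem integrable_sum_sq_leave_one_out_div_sub_one (hL2 : ∀ i ∈ s, MemLp (X i) 2 P) (c : ℝ) :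
    Integrable (fun ω => ∑ k ∈ s, ((∑ i ∈ s, X i ω - X k ω) / c - 1) ^ 2) P := by
  simp_rw [div_eq_mul_inv]
  exact integrable_finsetSum _ fun k hk =>
    ((((memLp_finsetSum s hL2).sub (hL2 k hk)).mul_const c⁻¹).sub (memLp_const 1)).integrable_sq

theorem integral_sum_sq_leave_one_out_div_sub_one [DecidableEq ι] (hs : #s ≠ 1) (hμ : μ ≠ 0)
    (hL2 : ∀ i ∈ s, MemLp (X i) 2 P)
    (hindep : (s : Set ι).Pairwise fun i j => IndepFun (X i) (X j) P)
    (hmean : ∀ i ∈ s, ∫ ω, X i ω ∂P = μ) (hvar : ∀ i ∈ s, variance (X i) P = σ ^ 2) :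
    ∫ ω, ∑ k ∈ s, ((∑ i ∈ s, X i ω - X k ω) / ((#s - 1) * μ) - 1) ^ 2 ∂P
      = #s * σ ^ 2 / ((#s - 1) * μ ^ 2) := by
  have hc : ((#s : ℝ) - 1) * μ ≠ 0 := mul_ne_zero (sub_ne_zero.2 (Nat.cast_ne_one.2 hs)) hμ
  have hsum : ∀ ω, ∑ k ∈ s, ((∑ i ∈ s, X i ω - X k ω) / ((#s - 1) * μ) - 1) ^ 2
      = (∑ k ∈ s, (∑ i ∈ s, X i ω - X k ω - (#s - 1) * μ) ^ 2) / ((#s - 1) * μ) ^ 2 := by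
    intro ω
    simp_rw [Finset.sum_div, div_sub_one hc, div_pow]
  simp_rw [hsum, integral_div, integral_sum_sq_leave_one_out_sub hL2 hindep hmean hvar]
  field_simp
end

theorem tendsto_sqrt_div_sub_one : Tendsto (fun n : ℕ => √n / (n - 1)) atTop (𝓝 0) := by
  have h := (tendsto_inv_atTop_zero.comp
    (Real.tendsto_sqrt_atTop.comp tendsto_natCast_atTop_atTop)).mul
    (tendsto_natCast_div_add_atTop (-1 : ℝ))
  rw [zero_mul] at h
  refine h.congr fun n => ?_
  rw [Function.comp_apply, Function.comp_apply, ← sub_eq_add_neg, inv_mul_eq_div, div_right_comm,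
    Real.div_sqrt]

theorem sum_sq_tendsto_zero_in_probability_general
    {Ω : Type*} [MeasureSpace Ω] [IsProbabilityMeasure (ℙ : Measure Ω)]
    (X : ℕ → Ω → ℝ)
    (hindep : iIndepFun X ℙ)
    (hident : ∀ i, IdentDistrib (X i) (X 0) ℙ ℙ)
    (hL2 : MemLp (X 0) 2 ℙ)
    (μ σ γ : ℝ) (hμ : 0 < μ) (hσ : 0 < σ)
    (hmean : ∫ ω, X 0 ω ∂ℙ = μ)
    (hvar : variance (X 0) ℙ = σ ^ 2)
    (hγ : γ = σ / μ)
    (C : ℕ → ℕ → Ω → ℝ)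
    (hC : ∀ n k ω, C n k ω = ((∑ i ∈ Finset.range n, X i ω) - X k ω) / (((n : ℝ) - 1) * μ)) :
    ∀ r : ℝ, 0 < r →
      Tendsto
        (fun n : ℕ =>
          ℙ {ω | r ≤ (4 / (γ * Real.sqrt n)) * ∑ k ∈ Finset.range n, (C n k ω - 1) ^ 2})
        atTop (𝓝 0) := by
  intro r hr
  have hγ0 : 0 < γ := hγ ▸ div_pos hσ hμ
  have hL2' : ∀ i, MemLp (X i) 2 ℙ := fun i => (hident i).symm.memLp_snd hL2
  have hmean' : ∀ i, ∫ ω, X i ω ∂ℙ = μ := fun i => (hident i).integral_eq.trans hmean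
  have hvar' : ∀ i, variance (X i) ℙ = σ ^ 2 := fun i => (hident i).variance_eq.trans hvar
  simp_rw [hC]
  refine tendsto_measure_ge_of_tendsto_integral (fun n => ae_of_all _ fun ω => by positivity)
    (fun n => (integrable_sum_sq_leave_one_out_div_sub_one (fun i _ => hL2' i) _).const_mul _) ?_ hr
  have hE : ∀ n : ℕ, n ≠ 1 → ∫ ω, 4 / (γ * √n) * ∑ k ∈ range n,
      ((∑ i ∈ range n, X i ω - X k ω) / ((n - 1) * μ) - 1) ^ 2 = 4 * γ * (√n / (n - 1)) := by
    intro n hn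
    have h := integral_sum_sq_leave_one_out_div_sub_one (s := range n) (by rwa [card_range]) hμ.ne'
      (fun i _ => hL2' i) (fun i _ j _ hij => hindep.indepFun hij) (fun i _ => hmean' i)
      (fun i _ => hvar' i)
    rw [card_range] at h
    rw [integral_const_mul, h, hγ]
    field_simp
    rw [← div_div, Real.div_sqrt]
  simpa using (tendsto_sqrt_div_sub_one.const_mul (4 * γ)).congr'
    ((eventually_ne_atTop 1).mono fun n hn => (hE n hn).symm)

/-- `(4/(γ√n)) ∑_{k=1}^n (C_{n,k} - 1)²` converges to 0 in probability. -/
theorem sum_sq_tendsto_zero_in_probability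
    {Ω : Type*} [MeasureSpace Ω] [IsProbabilityMeasure (ℙ : Measure Ω)]
    (X : ℕ → Ω → ℝ) (hmeas : ∀ i, Measurable (X i))
    (hindep : iIndepFun X ℙ)
    (hident : ∀ i, IdentDistrib (X i) (X 0) ℙ ℙ)
    (hpos : ∀ i, ∀ ω, 0 < X i ω)
    (hL2 : MemLp (X 0) 2 ℙ)
    (μ σ γ : ℝ) (hμ : 0 < μ) (hσ : 0 < σ)
    (hmean : ∫ ω, X 0 ω ∂ℙ = μ)
    (hvar : variance (X 0) ℙ = σ ^ 2)
    (hγ : γ = σ / μ)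
    (C : ℕ → ℕ → Ω → ℝ)
    (hC : ∀ n k ω, C n k ω = ((∑ i ∈ Finset.range n, X i ω) - X k ω) / (((n : ℝ) - 1) * μ)) :
    ∀ r : ℝ, 0 < r →
      Tendsto
        (fun n : ℕ =>
          ℙ {ω | r ≤ (4 / (γ * Real.sqrt n)) * ∑ k ∈ Finset.range n, (C n k ω - 1) ^ 2})
        atTop (𝓝 0) :=
  sum_sq_tendsto_zero_in_probability_general X hindep hident hL2 μ σ γ hμ hσ hmean hvar hγ C hC
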